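/- arXiv:1305.4542 — 3 statements merged into one kernel-verified Lean document; each statement's English description precedes it below -/
import Mathlib

section
/- For the Ising lattice gas Hamiltonian on the torus T_L with exactly K = n² particles and L > 2n, the minimum of the energy over Ω_{L,K} equals -2n(n-1), and this minimum is attained at every square configuration η^x (all sites of x + {0,…,n-1}² occupied). -/
open Finset

/-- The two-dimensional discrete torus `{-L,…,L}²` (with `2L+1` sites per side). -/
abbrev Torus (L : ℕ) := ZMod (2 * L + 1) × ZMod (2 * L + 1)

/-- Particle configurations on the torus. -/
abbrev Config (L : ℕ) := Torus L → Bool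

/-- Occupation number of a site. -/
noncomputable def occ {L : ℕ} (η : Config L) (x : Torus L) : ℝ := if η x then 1 else 0

/-- The Ising lattice gas Hamiltonian `H(η) = -∑_{bonds {x,y}} η(x)η(y)`;
each nearest-neighbor bond of the torus is counted exactly once. -/
noncomputable def ham {L : ℕ} (η : Config L) : ℝ :=
  - ∑ x : Torus L, (occ η x * occ η (x + (1, 0)) + occ η x * occ η (x + (0, 1)))

/-- The number of particles of a configuration. -/
def numParticles {L : ℕ} (η : Config L) : ℕ :=
  ∑ x : Torus L, (if η x then 1 else 0)

/-- The square configuration `η^x`: all sites of `x + {0,…,n-1}²` are occupied. -/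
def squareConf (L n : ℕ) (x : Torus L) : Config L :=
  fun z => decide (∃ p ∈ Finset.range n ×ˢ Finset.range n,
    z = x + ((p.1 : ZMod (2 * L + 1)), (p.2 : ZMod (2 * L + 1))))

/-! ### Auxiliary lemmas -/

section Aux
set_option linter.unusedSectionVars false
variable {m : ℕ} [NeZero m]

lemma GS.cast_inj_of_lt {a b : ℕ} (ha : a < m) (hb : b < m)
    (h : (a : ZMod m) = b) : a = b := by
  have h2 := congrArg ZMod.val h
  rwa [ZMod.val_cast_of_lt ha, ZMod.val_cast_of_lt hb] at h2

lemma GS.exists_boundary {S : Finset (ZMod m)} (h1 : S.Nonempty) (h2 : S ≠ univ) :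
    ∃ s ∈ S, s - 1 ∉ S := by
  by_contra hcon
  push_neg at hcon
  obtain ⟨s₀, hs₀⟩ := h1
  have key : ∀ k : ℕ, s₀ - (k : ZMod m) ∈ S := by
    intro k
    induction k with
    | zero => simpa using hs₀
    | succ k ih =>
        have h3 := hcon _ ih
        have he : s₀ - ((k + 1 : ℕ) : ZMod m) = s₀ - (k : ZMod m) - 1 := by
          push_cast; ring
        rw [he]; exact h3
  apply h2
  rw [eq_univ_iff_forall]
  intro y
  have := key (s₀ - y).val
  rwa [ZMod.natCast_val, ZMod.cast_id, sub_sub_cancel] at this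

lemma GS.row_bound (S : Finset (ZMod m)) :
    #(S.filter fun x => x + 1 ∈ S) + (if S.Nonempty ∧ S ≠ univ then 1 else 0) ≤ #S := by
  split_ifs with h
  · obtain ⟨h1, h2⟩ := h
    obtain ⟨s, hs, hs'⟩ := GS.exists_boundary h1 h2
    have himg : (S.filter fun x => x + 1 ∈ S).image (· + 1) ⊆ S.erase s := by
      intro y hy
      simp only [mem_image, mem_filter] at hy
      obtain ⟨z, ⟨hz1, hz2⟩, rfl⟩ := hy
      refine mem_erase.mpr ⟨?_, hz2⟩
      intro hzs
      exact hs' (by rw [← hzs]; simpa using hz1)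
    have hinj : Set.InjOn (· + 1) ((S.filter fun x => x + 1 ∈ S) : Set (ZMod m)) := by
      intro a _ b _ hab
      simpa using hab
    calc #(S.filter fun x => x + 1 ∈ S) + 1
        = #((S.filter fun x => x + 1 ∈ S).image (· + 1)) + 1 := by
          rw [Finset.card_image_of_injOn hinj]
      _ ≤ #(S.erase s) + 1 := Nat.add_le_add_right (card_le_card himg) 1
      _ = #S := by
          rw [Finset.card_erase_of_mem hs, Nat.sub_add_cancel (card_pos.mpr ⟨s, hs⟩)]
  · simpa using card_le_card (filter_subset _ _)

variable (ψ : ZMod m → ZMod m → Prop) [∀ j i, Decidable (ψ j i)]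

lemma GS.dir_bound :
    (∑ j, #(univ.filter fun i => ψ j i ∧ ψ j (i + 1)))
      + #(univ.filter fun j => (univ.filter fun i => ψ j i).Nonempty)
    ≤ (∑ j, #(univ.filter fun i => ψ j i))
      + #(univ.filter fun j => (univ.filter fun i => ψ j i) = univ) := by
  have hrow : ∀ j, (univ.filter fun i => ψ j i ∧ ψ j (i + 1))
      = ((univ.filter fun i => ψ j i).filter fun i => i + 1 ∈ (univ.filter fun i => ψ j i)) := by
    intro j; ext i; simp
  have hsum := Finset.sum_le_sum
    (fun j (_ : j ∈ (univ : Finset (ZMod m))) => GS.row_bound (univ.filter fun i => ψ j i))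
  rw [Finset.sum_add_distrib] at hsum
  have hsub : (univ.filter fun j => (univ.filter fun i => ψ j i) = univ)
      ⊆ (univ.filter fun j => (univ.filter fun i => ψ j i).Nonempty) := by
    intro j hj
    simp only [mem_filter, mem_univ, true_and] at hj ⊢
    rw [hj]
    exact univ_nonempty
  have hind : ∑ j, (if (univ.filter fun i => ψ j i).Nonempty ∧ (univ.filter fun i => ψ j i) ≠ univ
        then 1 else 0)
      = #(univ.filter fun j => (univ.filter fun i => ψ j i).Nonempty)
        - #(univ.filter fun j => (univ.filter fun i => ψ j i) = univ) := by
    rw [← Finset.card_filter]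
    rw [show (univ.filter fun j => (univ.filter fun i => ψ j i).Nonempty
          ∧ (univ.filter fun i => ψ j i) ≠ univ)
        = (univ.filter fun j => (univ.filter fun i => ψ j i).Nonempty)
          \ (univ.filter fun j => (univ.filter fun i => ψ j i) = univ) from by
      ext j; simp only [mem_filter, mem_sdiff, mem_univ, true_and, ne_eq]]
    exact card_sdiff_of_subset hsub
  rw [hind] at hsum
  have hle := card_le_card hsub
  rw [Finset.sum_congr rfl (fun j (_ : j ∈ (univ : Finset (ZMod m))) => congrArg card (hrow j))]
  omega

lemma GS.full_le :
    #(univ.filter fun j => (univ.filter fun i => ψ j i) = univ)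
      ≤ #(univ.filter fun j => (univ.filter fun i => ψ j i).Nonempty) := by
  refine card_le_card fun j hj => ?_
  simp only [mem_filter, mem_univ, true_and] at hj ⊢
  rw [hj]
  exact univ_nonempty

lemma GS.full_line
    (h : 1 ≤ #(univ.filter fun j => (univ.filter fun i => ψ j i) = univ)) :
    #(univ.filter fun i => (univ.filter fun j => ψ j i).Nonempty) = m := by
  obtain ⟨j, hj⟩ := card_pos.mp h
  simp only [mem_filter, mem_univ, true_and] at hj
  have hall : ∀ i, ψ j i := by
    intro i
    have : i ∈ univ.filter fun i => ψ j i := by rw [hj]; exact mem_univ i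
    simpa using this
  have : (univ.filter fun i => (univ.filter fun j => ψ j i).Nonempty) = univ := by
    rw [eq_univ_iff_forall]
    intro i
    exact mem_filter.mpr ⟨mem_univ i, ⟨j, mem_filter.mpr ⟨mem_univ j, hall i⟩⟩⟩
  rw [this, card_univ, ZMod.card]

lemma GS.full_mul :
    #(univ.filter fun j => (univ.filter fun i => ψ j i) = univ) * m
      ≤ ∑ j, #(univ.filter fun i => ψ j i) := by
  set F := univ.filter fun j => (univ.filter fun i => ψ j i) = univ with hF
  have h1 : ∑ j ∈ F, #(univ.filter fun i => ψ j i) = #F * m := by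
    rw [Finset.sum_congr rfl (fun j hj => ?_), Finset.sum_const, smul_eq_mul]
    simp only [hF, mem_filter, mem_univ, true_and] at hj
    rw [hj, card_univ, ZMod.card]
  rw [← h1]
  exact Finset.sum_le_sum_of_subset (subset_univ F)

lemma GS.count_eq :
    ∑ j, #(univ.filter fun i => ψ j i) = #(univ.filter fun z : ZMod m × ZMod m => ψ z.2 z.1) := by
  have h : #(univ.filter fun z : ZMod m × ZMod m => ψ z.2 z.1)
      = ∑ j, ∑ i, if ψ j i then 1 else 0 := by
    rw [Finset.card_filter, Fintype.sum_prod_type]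
    exact Finset.sum_comm
  rw [h]
  exact Finset.sum_congr rfl fun j _ => Finset.card_filter _ _

lemma GS.K_le :
    #(univ.filter fun z : ZMod m × ZMod m => ψ z.2 z.1)
      ≤ #(univ.filter fun i => (univ.filter fun j => ψ j i).Nonempty)
        * #(univ.filter fun j => (univ.filter fun i => ψ j i).Nonempty) := by
  have hsub : (univ.filter fun z : ZMod m × ZMod m => ψ z.2 z.1)
      ⊆ (univ.filter fun i => (univ.filter fun j => ψ j i).Nonempty)
        ×ˢ (univ.filter fun j => (univ.filter fun i => ψ j i).Nonempty) := by
    rintro ⟨i, j⟩ hz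
    simp only [mem_filter, mem_univ, true_and] at hz
    refine mem_product.mpr ⟨?_, ?_⟩
    · exact mem_filter.mpr ⟨mem_univ i, ⟨j, mem_filter.mpr ⟨mem_univ j, hz⟩⟩⟩
    · exact mem_filter.mpr ⟨mem_univ j, ⟨i, mem_filter.mpr ⟨mem_univ i, hz⟩⟩⟩
  calc _ ≤ _ := card_le_card hsub
    _ = _ := card_product _ _

lemma GS.K_le' :
    ∑ j, #(univ.filter fun i => ψ j i)
      ≤ #(univ.filter fun i => (univ.filter fun j => ψ j i).Nonempty)
        * #(univ.filter fun j => (univ.filter fun i => ψ j i).Nonempty) := by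
  rw [GS.count_eq]
  exact GS.K_le ψ

end Aux

lemma GS.final_arith (H V K r c fr fc m n : ℕ) (hn : 1 ≤ n) (hm : 4 * n + 3 ≤ m)
    (h1 : H + r ≤ K + fr) (h2 : V + c ≤ K + fc) (hK : K = n * n)
    (hrc : K ≤ c * r) (hfr : fr ≤ r) (hfc : fc ≤ c)
    (hfrm : fr * m ≤ K) (hfcm : fc * m ≤ K)
    (hr1 : 1 ≤ fr → c = m) (hc1 : 1 ≤ fc → r = m) :
    H + V + 2 * n ≤ 2 * (n * n) := by
  subst hK
  have hfrn : fr ≤ n := by nlinarith [Nat.mul_le_mul_left fr hm]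
  have hfcn : fc ≤ n := by nlinarith [Nat.mul_le_mul_left fc hm]
  have key : 2 * n + fr + fc ≤ r + c := by
    rcases Nat.eq_zero_or_pos fr with h | h
    · rcases Nat.eq_zero_or_pos fc with h' | h'
      · subst h h'
        zify at hrc ⊢
        nlinarith [sq_nonneg ((r : ℤ) - c)]
      · have := hc1 h'; omega
    · have := hr1 h
      rcases Nat.eq_zero_or_pos fc with h' | h'
      · omega
      · have := hc1 h'; omega
  omega

/-! ### Hamiltonian and particle number as counts -/

lemma GS.ham_eq {L : ℕ} (η : Config L) :
    ham η = -((#(univ.filter fun x : Torus L => η x ∧ η (x + (1, 0))) : ℝ)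
      + (#(univ.filter fun x : Torus L => η x ∧ η (x + (0, 1))) : ℝ)) := by
  unfold ham occ
  rw [Finset.sum_add_distrib]
  congr 1
  congr 1
  · rw [Finset.card_filter]
    push_cast
    refine Finset.sum_congr rfl fun x _ => ?_
    by_cases h1 : η x <;> by_cases h2 : η (x + (1, 0)) <;> simp [h1, h2]
  · rw [Finset.card_filter]
    push_cast
    refine Finset.sum_congr rfl fun x _ => ?_
    by_cases h1 : η x <;> by_cases h2 : η (x + (0, 1)) <;> simp [h1, h2]

lemma GS.numParticles_eq {L : ℕ} (η : Config L) :
    numParticles η = #(univ.filter fun x : Torus L => (η x : Prop)) := by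
  rw [numParticles, Finset.card_filter]

lemma GS.col_sum {L : ℕ} (η : Config L) :
    ∑ i, #(univ.filter fun j => (η (i, j) : Prop)) = numParticles η := by
  rw [numParticles, Fintype.sum_prod_type]
  exact Finset.sum_congr rfl fun i _ => Finset.card_filter _ _

lemma GS.row_sum {L : ℕ} (η : Config L) :
    ∑ j, #(univ.filter fun i => (η (i, j) : Prop)) = numParticles η := by
  rw [numParticles, Fintype.sum_prod_type, Finset.sum_comm]
  exact Finset.sum_congr rfl fun j _ => Finset.card_filter _ _

lemma GS.hcount {L : ℕ} (η : Config L) :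
    #(univ.filter fun x : Torus L => η x ∧ η (x + (1, 0)))
      = ∑ j, #(univ.filter fun i => η (i, j) ∧ η (i + 1, j)) := by
  have h : #(univ.filter fun x : Torus L => η x ∧ η (x + (1, 0)))
      = ∑ j, ∑ i : ZMod (2 * L + 1), if η (i, j) ∧ η (i + 1, j) then 1 else 0 := by
    rw [Finset.card_filter, Fintype.sum_prod_type]
    simp only [Prod.mk_add_mk, add_zero]
    exact Finset.sum_comm
  rw [h]
  exact Finset.sum_congr rfl fun j _ => (Finset.card_filter _ _).symm

lemma GS.vcount {L : ℕ} (η : Config L) :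
    #(univ.filter fun x : Torus L => η x ∧ η (x + (0, 1)))
      = ∑ i, #(univ.filter fun j => η (i, j) ∧ η (i, j + 1)) := by
  rw [Finset.card_filter, Fintype.sum_prod_type]
  simp only [Prod.mk_add_mk, add_zero]
  exact Finset.sum_congr rfl fun i _ => (Finset.card_filter _ _).symm

/-! ### Square configurations -/

section Square
set_option linter.unusedSectionVars false
variable {L n : ℕ} (x : Torus L) (hn : 0 < n) (hL : 2 * n < L)

private lemma injf (hnL : n < 2 * L + 1) (a b : ℕ) (ha : a ≤ n) (hb : b ≤ n) :
    Set.InjOn (fun p : ℕ × ℕ => x + ((p.1 : ZMod (2 * L + 1)), (p.2 : ZMod (2 * L + 1))))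
      ((range a ×ˢ range b : Finset (ℕ × ℕ)) : Set (ℕ × ℕ)) := by
  rintro ⟨p1, p2⟩ hp ⟨q1, q2⟩ hq h
  simp only [coe_product, Set.mem_prod, mem_coe, mem_range] at hp hq
  simp only [add_right_inj, Prod.mk.injEq] at h
  have e1 := GS.cast_inj_of_lt (by omega : p1 < 2 * L + 1) (by omega : q1 < 2 * L + 1) h.1
  have e2 := GS.cast_inj_of_lt (by omega : p2 < 2 * L + 1) (by omega : q2 < 2 * L + 1) h.2
  simp [e1, e2]

private lemma sq_iff (z : Torus L) :
    (squareConf L n x z : Prop) ↔ ∃ p1 < n, ∃ p2 < n,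
      z = x + ((p1 : ZMod (2 * L + 1)), (p2 : ZMod (2 * L + 1))) := by
  simp only [squareConf, decide_eq_true_eq, mem_product, mem_range]
  constructor
  · rintro ⟨⟨p1, p2⟩, ⟨h1, h2⟩, h⟩
    exact ⟨p1, h1, p2, h2, h⟩
  · rintro ⟨p1, h1, p2, h2, h⟩
    exact ⟨(p1, p2), ⟨h1, h2⟩, h⟩

lemma GS.sq_filter :
    (univ.filter fun z : Torus L => (squareConf L n x z : Prop))
      = (range n ×ˢ range n).image
          (fun p : ℕ × ℕ => x + ((p.1 : ZMod (2 * L + 1)), (p.2 : ZMod (2 * L + 1)))) := by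
  ext z
  simp only [mem_filter, mem_univ, true_and, sq_iff, mem_image, mem_product, mem_range]
  constructor
  · rintro ⟨p1, h1, p2, h2, h⟩
    exact ⟨(p1, p2), ⟨h1, h2⟩, h.symm⟩
  · rintro ⟨⟨p1, p2⟩, ⟨h1, h2⟩, h⟩
    exact ⟨p1, h1, p2, h2, h.symm⟩

include hn hL

lemma GS.sq_card :
    #(univ.filter fun z : Torus L => (squareConf L n x z : Prop)) = n * n := by
  rw [GS.sq_filter, Finset.card_image_of_injOn (injf x (by omega) n n le_rfl le_rfl)]
  simp

lemma GS.sq_hfilter :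
    (univ.filter fun z : Torus L =>
        (squareConf L n x z : Prop) ∧ (squareConf L n x (z + (1, 0)) : Prop))
      = (range (n - 1) ×ˢ range n).image
          (fun p : ℕ × ℕ => x + ((p.1 : ZMod (2 * L + 1)), (p.2 : ZMod (2 * L + 1)))) := by
  ext z
  simp only [mem_filter, mem_univ, true_and, sq_iff, mem_image, mem_product, mem_range]
  constructor
  · rintro ⟨⟨p1, h1, p2, h2, rfl⟩, ⟨q1, hq1, q2, hq2, hq⟩⟩
    have he : x + ((↑(p1 + 1) : ZMod (2 * L + 1)), (p2 : ZMod (2 * L + 1)))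
        = x + ((q1 : ZMod (2 * L + 1)), (q2 : ZMod (2 * L + 1))) := by
      rw [← hq, add_assoc]
      push_cast
      congr 1
      simp [Prod.ext_iff]
    simp only [add_right_inj, Prod.mk.injEq] at he
    have e1 := GS.cast_inj_of_lt (by omega : p1 + 1 < 2 * L + 1)
      (by omega : q1 < 2 * L + 1) he.1
    exact ⟨(p1, p2), ⟨by omega, h2⟩, rfl⟩
  · rintro ⟨⟨p1, p2⟩, ⟨h1, h2⟩, rfl⟩
    have h1n : p1 < n := by omega
    refine ⟨⟨p1, h1n, p2, h2, rfl⟩, ⟨p1 + 1, by omega, p2, h2, ?_⟩⟩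
    rw [add_assoc]
    push_cast
    congr 1
    simp [Prod.ext_iff]

lemma GS.sq_vfilter :
    (univ.filter fun z : Torus L =>
        (squareConf L n x z : Prop) ∧ (squareConf L n x (z + (0, 1)) : Prop))
      = (range n ×ˢ range (n - 1)).image
          (fun p : ℕ × ℕ => x + ((p.1 : ZMod (2 * L + 1)), (p.2 : ZMod (2 * L + 1)))) := by
  ext z
  simp only [mem_filter, mem_univ, true_and, sq_iff, mem_image, mem_product, mem_range]
  constructor
  · rintro ⟨⟨p1, h1, p2, h2, rfl⟩, ⟨q1, hq1, q2, hq2, hq⟩⟩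
    have he : x + ((p1 : ZMod (2 * L + 1)), (↑(p2 + 1) : ZMod (2 * L + 1)))
        = x + ((q1 : ZMod (2 * L + 1)), (q2 : ZMod (2 * L + 1))) := by
      rw [← hq, add_assoc]
      push_cast
      congr 1
      simp [Prod.ext_iff]
    simp only [add_right_inj, Prod.mk.injEq] at he
    have e2 := GS.cast_inj_of_lt (by omega : p2 + 1 < 2 * L + 1)
      (by omega : q2 < 2 * L + 1) he.2
    exact ⟨(p1, p2), ⟨h1, by omega⟩, rfl⟩
  · rintro ⟨⟨p1, p2⟩, ⟨h1, h2⟩, rfl⟩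
    have h2n : p2 < n := by omega
    refine ⟨⟨p1, h1, p2, h2n, rfl⟩, ⟨p1, h1, p2 + 1, by omega, ?_⟩⟩
    rw [add_assoc]
    push_cast
    congr 1
    simp [Prod.ext_iff]

lemma GS.sq_hcard :
    #(univ.filter fun z : Torus L =>
        (squareConf L n x z : Prop) ∧ (squareConf L n x (z + (1, 0)) : Prop))
      = (n - 1) * n := by
  rw [GS.sq_hfilter x hn hL,
    Finset.card_image_of_injOn (injf x (by omega) (n - 1) n (by omega) le_rfl)]
  simp

lemma GS.sq_vcard :
    #(univ.filter fun z : Torus L =>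
        (squareConf L n x z : Prop) ∧ (squareConf L n x (z + (0, 1)) : Prop))
      = n * (n - 1) := by
  rw [GS.sq_vfilter x hn hL,
    Finset.card_image_of_injOn (injf x (by omega) n (n - 1) le_rfl (by omega))]
  simp

end Square

/-- for `K = n²` particles and `L > 2n`, every square configuration `η^x`
has exactly `n²` particles and energy `-2n(n-1)`, and `-2n(n-1)` is the minimum of the
energy over all configurations with `n²` particles. -/
theorem square_configs_are_ground_states (L n : ℕ) (hn : 0 < n) (hL : 2 * n < L) :
    (∀ x : Torus L,
      numParticles (squareConf L n x) = n ^ 2 ∧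
      ham (squareConf L n x) = -(2 * (n : ℝ) * ((n : ℝ) - 1))) ∧
    (∀ η : Config L, numParticles η = n ^ 2 →
      -(2 * (n : ℝ) * ((n : ℝ) - 1)) ≤ ham η) := by
  have hn1 : (1 : ℕ) ≤ n := hn
  constructor
  · intro x
    constructor
    · rw [GS.numParticles_eq, GS.sq_card x hn hL, pow_two]
    · rw [GS.ham_eq, GS.sq_hcard x hn hL, GS.sq_vcard x hn hL]
      have hc : ((n - 1 : ℕ) : ℝ) = (n : ℝ) - 1 := by
        push_cast [Nat.cast_sub hn1]
        ring
      push_cast [hc]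
      ring
  · intro η hK
    have hb := GS.final_arith
      (∑ j, #(univ.filter fun i => (η (i, j) : Prop) ∧ (η (i + 1, j) : Prop)))
      (∑ i, #(univ.filter fun j => (η (i, j) : Prop) ∧ (η (i, j + 1) : Prop)))
      (numParticles η)
      #(univ.filter fun j : ZMod (2 * L + 1) =>
        (univ.filter fun i => (η (i, j) : Prop)).Nonempty)
      #(univ.filter fun i : ZMod (2 * L + 1) =>
        (univ.filter fun j => (η (i, j) : Prop)).Nonempty)
      #(univ.filter fun j : ZMod (2 * L + 1) =>
        (univ.filter fun i => (η (i, j) : Prop)) = univ)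
      #(univ.filter fun i : ZMod (2 * L + 1) =>
        (univ.filter fun j => (η (i, j) : Prop)) = univ)
      (2 * L + 1) n hn1 (by omega)
      ?_ ?_ (by rw [hK]; ring) ?_ ?_ ?_ ?_ ?_ ?_ ?_
    · -- conclude
      rw [GS.ham_eq, GS.hcount, GS.vcount]
      set A := (∑ j, #(univ.filter fun i => (η (i, j) : Prop) ∧ (η (i + 1, j) : Prop))) with hA
      set B := (∑ i, #(univ.filter fun j => (η (i, j) : Prop) ∧ (η (i, j + 1) : Prop))) with hB
      have h2 : (A : ℝ) + B + 2 * n ≤ 2 * (n * n) := by exact_mod_cast hb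
      nlinarith [h2]
    · -- H + r ≤ K + fr
      have hd := GS.dir_bound (fun j i => (η (i, j) : Prop))
      rw [GS.row_sum η] at hd
      exact hd
    · -- V + c ≤ K + fc
      have hd := GS.dir_bound (fun i j => (η (i, j) : Prop))
      rw [GS.col_sum η] at hd
      exact hd
    · -- K ≤ c * r
      have hk := GS.K_le' (fun j i => (η (i, j) : Prop))
      rw [GS.row_sum η] at hk
      exact hk
    · exact GS.full_le (fun j i => (η (i, j) : Prop))
    · exact GS.full_le (fun i j => (η (i, j) : Prop))
    · -- fr * m ≤ K
      have hm := GS.full_mul (fun j i => (η (i, j) : Prop))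
      rw [GS.row_sum η] at hm
      exact hm
    · -- fc * m ≤ K
      have hm := GS.full_mul (fun i j => (η (i, j) : Prop))
      rw [GS.col_sum η] at hm
      exact hm
    · exact fun h => GS.full_line (fun j i => (η (i, j) : Prop)) h
    · exact fun h => GS.full_line (fun i j => (η (i, j) : Prop)) h
end

section
/- For the Ising lattice gas Hamiltonian on the torus T_L with K = n² particles and L > 2n, every configuration η ∈ Ω_{L,K} which is not a square configuration satisfies H(η) > -2n(n-1); that is, the square configurations are the unique ground states. -/
open Finset

set_option maxHeartbeats 1000000
open Finset

namespace NSq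
variable {m : ℕ} [NeZero m]

/-- number of (directed, i.e. each undirected bond once) nearest-neighbor bonds
inside `S` on the cycle `ZMod m`. -/
def ebonds (S : Finset (ZMod m)) : ℕ := (S.filter (fun a => a + 1 ∈ S)).card

lemma ebonds_le_card (S : Finset (ZMod m)) : ebonds S ≤ S.card :=
  card_le_card (filter_subset _ _)

lemma closed_eq_univ (S : Finset (ZMod m)) (hne : S.Nonempty)
    (h : ∀ a ∈ S, a + 1 ∈ S) : S = univ := by
  obtain ⟨a, ha⟩ := hne
  have key : ∀ k : ℕ, a + (k : ZMod m) ∈ S := by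
    intro k
    induction k with
    | zero => simpa using ha
    | succ k ih =>
      have := h _ ih
      push_cast
      rw [← add_assoc]
      exact this
  apply eq_univ_of_forall
  intro z
  have := key ((z - a).val)
  rwa [ZMod.natCast_val, ZMod.cast_id, add_sub_cancel] at this

lemma ebonds_add_one_le (S : Finset (ZMod m)) (hne : S.Nonempty) (hu : S ≠ univ) :
    ebonds S + 1 ≤ S.card := by
  have hwit : ∃ a ∈ S, a + 1 ∉ S := by
    by_contra h
    push_neg at h
    exact hu (closed_eq_univ S hne h)
  obtain ⟨a, haS, ha1⟩ := hwit
  have hsub : S.filter (fun a => a + 1 ∈ S) ⊆ S.erase a := by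
    intro x hx
    rw [mem_filter] at hx
    refine mem_erase.2 ⟨?_, hx.1⟩
    rintro rfl; exact ha1 hx.2
  have := card_le_card hsub
  have hcard := card_erase_of_mem haS
  have hpos : 1 ≤ S.card := card_pos.2 ⟨a, haS⟩
  unfold ebonds
  omega

lemma natCast_inj_of_lt {i j : ℕ} (hi : i < m) (hj : j < m)
    (h : (i : ZMod m) = (j : ZMod m)) : i = j := by
  have := congrArg ZMod.val h
  rwa [ZMod.val_cast_of_lt hi, ZMod.val_cast_of_lt hj] at this

lemma ebonds_eq_interval (S : Finset (ZMod m)) (hne : S.Nonempty) (hu : S ≠ univ)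
    (heq : ebonds S + 1 = S.card) :
    ∃ x : ZMod m, S = (range S.card).image (fun i : ℕ => x + (i : ZMod m)) := by
  classical
  set T : Finset (ZMod m) := S.image (fun s => s - 1) with hT
  have hmemT : ∀ a : ZMod m, a ∈ T ↔ a + 1 ∈ S := by
    intro a
    simp only [hT, mem_image]
    constructor
    · rintro ⟨s, hs, rfl⟩; simpa using hs
    · intro h; exact ⟨a + 1, h, by ring⟩
  have hcardT : T.card = S.card := card_image_of_injective _ (sub_left_injective)
  have hebonds : ebonds S = (S ∩ T).card := by
    unfold ebonds
    congr 1
    ext a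
    simp [mem_filter, mem_inter, hmemT]
  have hout : (S \ T).card = 1 := by
    have h1 := card_inter_add_card_sdiff S T
    omega
  have hinn : (T \ S).card = 1 := by
    have h1 := card_inter_add_card_sdiff T S
    rw [inter_comm] at h1
    omega
  obtain ⟨a, ha⟩ := card_eq_one.1 hout
  obtain ⟨b, hb⟩ := card_eq_one.1 hinn
  have haS : a ∈ S ∧ a + 1 ∉ S := by
    have : a ∈ S \ T := by rw [ha]; exact mem_singleton_self a
    rw [mem_sdiff, hmemT] at this; exact this
  have hbS : b ∉ S ∧ b + 1 ∈ S := by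
    have : b ∈ T \ S := by rw [hb]; exact mem_singleton_self b
    rw [mem_sdiff, hmemT] at this; tauto
  have huniq : ∀ x, x ∈ S → x + 1 ∉ S → x = a := by
    intro x hx hx1
    have : x ∈ S \ T := by rw [mem_sdiff, hmemT]; exact ⟨hx, hx1⟩
    rw [ha, mem_singleton] at this; exact this
  set i₀ : ℕ := (a - (b + 1)).val with hi₀def
  have hi₀m : i₀ < m := ZMod.val_lt _
  have ha_eq : a = b + 1 + (i₀ : ZMod m) := by
    rw [hi₀def, ZMod.natCast_val, ZMod.cast_id]
    ring
  -- everything from b+1 to b+1+i₀ lies in S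
  have claim1 : ∀ j : ℕ, j ≤ i₀ → b + 1 + (j : ZMod m) ∈ S := by
    intro j hj
    induction j with
    | zero => simpa using hbS.2
    | succ j ih =>
      have hj' : j ≤ i₀ := le_of_lt hj
      have hmem := ih hj'
      by_contra hcon
      have hsucc : b + 1 + (j : ZMod m) + 1 ∉ S := by
        push_cast at hcon
        convert hcon using 2
        ring
      have := huniq _ hmem hsucc
      rw [ha_eq] at this
      have : (j : ZMod m) = (i₀ : ZMod m) := by
        have := this
        linear_combination this
      have := natCast_inj_of_lt (lt_of_lt_of_le hj hi₀m.le) hi₀m this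
      omega
  -- everything strictly between b+1+i₀ and b (going around) is outside S
  have claim2aux : ∀ k : ℕ, k + i₀ + 2 ≤ m → b + 1 + ((m - 1 - k : ℕ) : ZMod m) ∉ S := by
    intro k
    induction k with
    | zero =>
      intro _
      have hm1 : ((m - 1 : ℕ) : ZMod m) = -1 := by
        have : ((m - 1 : ℕ) : ZMod m) + 1 = ((m : ℕ) : ZMod m) := by
          rw [← Nat.cast_succ]
          congr 1
          omega
        rw [ZMod.natCast_self] at this
        linear_combination this
      rw [Nat.sub_zero, hm1]
      have : b + 1 + (-1) = b := by ring
      rw [this]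
      exact hbS.1
    | succ k ih =>
      intro hk
      have ihh := ih (by omega)
      by_contra hcon
      have hstep : b + 1 + ((m - 1 - (k+1) : ℕ) : ZMod m) + 1 = b + 1 + ((m - 1 - k : ℕ) : ZMod m) := by
        have h1 : (m - 1 - (k+1)) + 1 = m - 1 - k := by omega
        rw [← h1]
        push_cast
        ring
      have := huniq _ hcon (by rw [hstep]; exact ihh)
      rw [ha_eq] at this
      have heq2 : ((m - 1 - (k+1) : ℕ) : ZMod m) = (i₀ : ZMod m) := by
        linear_combination this
      have := natCast_inj_of_lt (by omega : m - 1 - (k+1) < m) hi₀m heq2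
      omega
  have claim2 : ∀ j : ℕ, i₀ < j → j < m → b + 1 + (j : ZMod m) ∉ S := by
    intro j h1 h2
    have hj : j = m - 1 - (m - 1 - j) := by omega
    rw [hj]
    exact claim2aux (m - 1 - j) (by omega)
  have hSeq : S = (range (i₀ + 1)).image (fun i : ℕ => (b + 1) + (i : ZMod m)) := by
    apply Finset.Subset.antisymm
    · intro z hz
      rw [mem_image]
      set j : ℕ := (z - (b + 1)).val with hjdef
      have hjm : j < m := ZMod.val_lt _
      have hzeq : z = b + 1 + (j : ZMod m) := by
        rw [hjdef, ZMod.natCast_val, ZMod.cast_id]; ring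
      have hji : j ≤ i₀ := by
        by_contra hcon
        exact claim2 j (by omega) hjm (hzeq ▸ hz)
      exact ⟨j, mem_range.2 (by omega), hzeq.symm⟩
    · intro z hz
      rw [mem_image] at hz
      obtain ⟨j, hj, rfl⟩ := hz
      exact claim1 j (by have := mem_range.1 hj; omega)
  have hcard : S.card = i₀ + 1 := by
    rw [hSeq, card_image_of_injOn, card_range]
    intro x hx y hy hxy
    simp only [mem_coe, mem_range] at hx hy
    have : (x : ZMod m) = (y : ZMod m) := by
      field_simp at hxy
      linear_combination hxy
    exact natCast_inj_of_lt (by omega) (by omega) this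
  exact ⟨b + 1, by rw [hcard]; exact hSeq⟩




lemma aux_full {n : ℕ} (hm : 4 * n + 3 ≤ m) (hn : 1 ≤ n)
    (row col : ZMod m → Finset (ZMod m))
    (hrc : ∀ i j, j ∈ row i ↔ i ∈ col j)
    (hKr : ∑ i, (row i).card = n ^ 2) (hKc : ∑ j, (col j).card = n ^ 2)
    (i0 : ZMod m) (hfull : row i0 = univ) :
    ∑ i, ebonds (row i) + ∑ j, ebonds (col j) < 2 * n * (n - 1) := by
  classical
  have hcardU : (univ : Finset (ZMod m)).card = m := by
    simp [ZMod.card]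
  have hmK : m ≤ n ^ 2 := by
    have h1 : (row i0).card ≤ ∑ i, (row i).card :=
      Finset.single_le_sum (f := fun i => (row i).card) (fun i _ => Nat.zero_le _) (mem_univ i0)
    rw [hfull, hcardU] at h1
    omega
  have hcolne : ∀ j, (col j).Nonempty := fun j =>
    ⟨i0, (hrc i0 j).1 (hfull ▸ mem_univ j)⟩
  have step : ∀ j : ZMod m, ebonds (col j) + (if col j = univ then 0 else 1) ≤ (col j).card := by
    intro j
    split_ifs with h
    · simpa using ebonds_le_card (col j)
    · exact ebonds_add_one_le _ (hcolne j) h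
  have hsum := Finset.sum_le_sum (fun j (_ : j ∈ (univ : Finset (ZMod m))) => step j)
  rw [Finset.sum_add_distrib, hKc] at hsum
  have hite : ∑ j : ZMod m, (if col j = univ then 0 else 1)
      = m - (univ.filter (fun j : ZMod m => col j = univ)).card := by
    have h1 : ∑ j : ZMod m, (if col j = univ then 0 else 1)
        = (univ.filter (fun j : ZMod m => ¬ col j = univ)).card := by
      rw [Finset.card_filter]
      apply Finset.sum_congr rfl
      intro j _
      split_ifs with h <;> simp [h]
    rw [h1]
    have h2 := Finset.card_filter_add_card_filter_not
      (s := (univ : Finset (ZMod m))) (p := fun j => col j = univ)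
    rw [hcardU] at h2
    omega
  rw [hite] at hsum
  have hfm : (univ.filter (fun j : ZMod m => col j = univ)).card * m ≤ n ^ 2 := by
    have h1 : ∑ j ∈ univ.filter (fun j : ZMod m => col j = univ), (col j).card
        = (univ.filter (fun j : ZMod m => col j = univ)).card * m := by
      rw [Finset.sum_congr rfl (fun j hj => by
        rw [(mem_filter.1 hj).2, hcardU])]
      simp [mul_comm]
    have h2 : ∑ j ∈ univ.filter (fun j : ZMod m => col j = univ), (col j).card
        ≤ ∑ j, (col j).card :=
      Finset.sum_le_sum_of_subset (subset_univ _)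
    rw [h1, hKc] at h2
    exact h2
  have hfn : (univ.filter (fun j : ZMod m => col j = univ)).card < n := by
    have h1 : (univ.filter (fun j : ZMod m => col j = univ)).card * m < n * m := by nlinarith
    exact Nat.lt_of_mul_lt_mul_right h1
  have hh : ∑ i, ebonds (row i) ≤ n ^ 2 := by
    calc ∑ i, ebonds (row i) ≤ ∑ i, (row i).card :=
          Finset.sum_le_sum (fun i _ => ebonds_le_card _)
      _ = n ^ 2 := hKr
  have hexp : 2 * n * (n - 1) + 2 * n = 2 * n ^ 2 := by
    have h1 : n - 1 + 1 = n := by omega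
    calc 2 * n * (n - 1) + 2 * n = 2 * n * ((n - 1) + 1) := by ring
      _ = 2 * n * n := by rw [h1]
      _ = 2 * n ^ 2 := by ring
  have hsub : m - (univ.filter (fun j : ZMod m => col j = univ)).card
      + (univ.filter (fun j : ZMod m => col j = univ)).card = m := by omega
  linarith




lemma aux_main {n : ℕ} (hn : 1 ≤ n)
    (row col : ZMod m → Finset (ZMod m))
    (hrc : ∀ i j, j ∈ row i ↔ i ∈ col j)
    (hKr : ∑ i, (row i).card = n ^ 2) (hKc : ∑ j, (col j).card = n ^ 2)
    (hnfr : ∀ i, row i ≠ univ) (hnfc : ∀ j, col j ≠ univ) :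
    (∑ i, ebonds (row i) + ∑ j, ebonds (col j) < 2 * n * (n - 1)) ∨
    (∃ a b : ZMod m, ∀ i j : ZMod m,
      (j ∈ row i ↔ ((∃ p ∈ range n, j = a + (p : ZMod m))
        ∧ (∃ q ∈ range n, i = b + (q : ZMod m))))) := by
  classical
  -- nonempty rows / columns
  have hrowsum : ∀ (g : ZMod m → Finset (ZMod m)) (f : Finset (ZMod m) → ℕ),
      f ∅ = 0 → ∑ i, f (g i) = ∑ i ∈ univ.filter (fun i => (g i).Nonempty), f (g i) := by
    intro g f hf
    symm
    apply Finset.sum_subset (filter_subset _ _)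
    intro i _ hi
    rw [mem_filter, not_and] at hi
    have : g i = ∅ := by
      rw [← Finset.not_nonempty_iff_eq_empty]
      exact fun h => hi (mem_univ i) h
    rw [this, hf]
  have hKR : ∑ i ∈ univ.filter (fun i => (row i).Nonempty), (row i).card = n ^ 2 := by
    rw [← hrowsum row Finset.card Finset.card_empty]; exact hKr
  have hKC : ∑ j ∈ univ.filter (fun j => (col j).Nonempty), (col j).card = n ^ 2 := by
    rw [← hrowsum col Finset.card Finset.card_empty]; exact hKc
  have hebR : ∑ i, ebonds (row i) = ∑ i ∈ univ.filter (fun i => (row i).Nonempty), ebonds (row i) :=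
    hrowsum row ebonds (by simp [ebonds])
  have hebC : ∑ j, ebonds (col j) = ∑ j ∈ univ.filter (fun j => (col j).Nonempty), ebonds (col j) :=
    hrowsum col ebonds (by simp [ebonds])
  have hptR : ∀ i ∈ univ.filter (fun i => (row i).Nonempty), ebonds (row i) + 1 ≤ (row i).card := by
    intro i hi
    exact ebonds_add_one_le _ (mem_filter.1 hi).2 (hnfr i)
  have hptC : ∀ j ∈ univ.filter (fun j => (col j).Nonempty), ebonds (col j) + 1 ≤ (col j).card := by
    intro j hj
    exact ebonds_add_one_le _ (mem_filter.1 hj).2 (hnfc j)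
  have hBhr : ∑ i, ebonds (row i) + (univ.filter (fun i => (row i).Nonempty)).card ≤ n ^ 2 := by
    have := Finset.sum_le_sum hptR
    rw [Finset.sum_add_distrib, Finset.sum_const, smul_eq_mul, mul_one, hKR] at this
    rw [hebR]
    exact this
  have hBvc : ∑ j, ebonds (col j) + (univ.filter (fun j => (col j).Nonempty)).card ≤ n ^ 2 := by
    have := Finset.sum_le_sum hptC
    rw [Finset.sum_add_distrib, Finset.sum_const, smul_eq_mul, mul_one, hKC] at this
    rw [hebC]
    exact this
  -- rows are contained in the set of nonempty columns
  have hrowsub : ∀ i, row i ⊆ univ.filter (fun j => (col j).Nonempty) := by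
    intro i j hj
    exact mem_filter.2 ⟨mem_univ j, ⟨i, (hrc i j).1 hj⟩⟩
  have hcolsub : ∀ j, col j ⊆ univ.filter (fun i => (row i).Nonempty) := by
    intro j i hi
    exact mem_filter.2 ⟨mem_univ i, ⟨j, (hrc i j).2 hi⟩⟩
  have hKrc : n ^ 2 ≤ (univ.filter (fun i => (row i).Nonempty)).card *
      (univ.filter (fun j => (col j).Nonempty)).card := by
    calc n ^ 2 = ∑ i ∈ univ.filter (fun i => (row i).Nonempty), (row i).card := hKR.symm
      _ ≤ ∑ i ∈ univ.filter (fun i => (row i).Nonempty),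
            (univ.filter (fun j => (col j).Nonempty)).card :=
          Finset.sum_le_sum (fun i _ => card_le_card (hrowsub i))
      _ = _ := by rw [Finset.sum_const, smul_eq_mul]
  have h2n : 2 * n ≤ (univ.filter (fun i => (row i).Nonempty)).card +
      (univ.filter (fun j => (col j).Nonempty)).card := by
    have h := hKrc
    zify at h ⊢
    nlinarith [sq_nonneg (((univ.filter (fun i => (row i).Nonempty)).card : ℤ) -
      ((univ.filter (fun j => (col j).Nonempty)).card : ℤ))]
  by_cases hlt : ∑ i, ebonds (row i) + ∑ j, ebonds (col j) < 2 * n * (n - 1)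
  · exact Or.inl hlt
  right
  push_neg at hlt
  have hexp : 2 * n * (n - 1) + 2 * n = 2 * n ^ 2 := by
    have h1 : n - 1 + 1 = n := by omega
    calc 2 * n * (n - 1) + 2 * n = 2 * n * ((n - 1) + 1) := by ring
      _ = 2 * n * n := by rw [h1]
      _ = 2 * n ^ 2 := by ring
  -- all inequalities are equalities
  have heqBh : ∑ i, ebonds (row i) + (univ.filter (fun i => (row i).Nonempty)).card = n ^ 2 := by
    linarith
  have heqBv : ∑ j, ebonds (col j) + (univ.filter (fun j => (col j).Nonempty)).card = n ^ 2 := by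
    linarith
  have heqrc : (univ.filter (fun i => (row i).Nonempty)).card +
      (univ.filter (fun j => (col j).Nonempty)).card = 2 * n := by
    linarith
  have hr : (univ.filter (fun i => (row i).Nonempty)).card = n ∧
      (univ.filter (fun j => (col j).Nonempty)).card = n := by
    have h := hKrc
    constructor <;> (zify at h heqrc ⊢; nlinarith [h, heqrc])
  obtain ⟨hrn, hcn⟩ := hr
  -- each nonempty row equals the full set of nonempty columns
  have hroweq : ∀ i ∈ univ.filter (fun i => (row i).Nonempty),
      row i = univ.filter (fun j => (col j).Nonempty) := by
    have hpt : ∀ i ∈ univ.filter (fun i => (row i).Nonempty),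
        (row i).card ≤ (univ.filter (fun j => (col j).Nonempty)).card :=
      fun i _ => card_le_card (hrowsub i)
    have hsum_eq : ∑ i ∈ univ.filter (fun i => (row i).Nonempty), (row i).card
        = ∑ i ∈ univ.filter (fun i => (row i).Nonempty),
            (univ.filter (fun j => (col j).Nonempty)).card := by
      rw [hKR, Finset.sum_const, smul_eq_mul, hrn, hcn]
      exact (sq n).trans (by ring)
    have := (Finset.sum_eq_sum_iff_of_le hpt).1 hsum_eq
    intro i hi
    exact Finset.eq_of_subset_of_card_le (hrowsub i) (le_of_eq (this i hi).symm)
  have hcoleq : ∀ j ∈ univ.filter (fun j => (col j).Nonempty),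
      col j = univ.filter (fun i => (row i).Nonempty) := by
    have hpt : ∀ j ∈ univ.filter (fun j => (col j).Nonempty),
        (col j).card ≤ (univ.filter (fun i => (row i).Nonempty)).card :=
      fun j _ => card_le_card (hcolsub j)
    have hsum_eq : ∑ j ∈ univ.filter (fun j => (col j).Nonempty), (col j).card
        = ∑ j ∈ univ.filter (fun j => (col j).Nonempty),
            (univ.filter (fun i => (row i).Nonempty)).card := by
      rw [hKC, Finset.sum_const, smul_eq_mul, hrn, hcn]
      exact (sq n).trans (by ring)
    have := (Finset.sum_eq_sum_iff_of_le hpt).1 hsum_eq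
    intro j hj
    exact Finset.eq_of_subset_of_card_le (hcolsub j) (le_of_eq (this j hj).symm)
  -- pointwise equality of the e-bond count
  have heb_pt_R : ∀ i ∈ univ.filter (fun i => (row i).Nonempty),
      ebonds (row i) + 1 = (row i).card := by
    have hsum_eq : ∑ i ∈ univ.filter (fun i => (row i).Nonempty), (ebonds (row i) + 1)
        = ∑ i ∈ univ.filter (fun i => (row i).Nonempty), (row i).card := by
      rw [Finset.sum_add_distrib, Finset.sum_const, smul_eq_mul, mul_one, hKR, ← hebR]
      exact heqBh
    exact fun i hi => (Finset.sum_eq_sum_iff_of_le hptR).1 hsum_eq i hi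
  have heb_pt_C : ∀ j ∈ univ.filter (fun j => (col j).Nonempty),
      ebonds (col j) + 1 = (col j).card := by
    have hsum_eq : ∑ j ∈ univ.filter (fun j => (col j).Nonempty), (ebonds (col j) + 1)
        = ∑ j ∈ univ.filter (fun j => (col j).Nonempty), (col j).card := by
      rw [Finset.sum_add_distrib, Finset.sum_const, smul_eq_mul, mul_one, hKC, ← hebC]
      exact heqBv
    exact fun j hj => (Finset.sum_eq_sum_iff_of_le hptC).1 hsum_eq j hj
  -- pick a nonempty row and a nonempty column
  have hRne : (univ.filter (fun i => (row i).Nonempty)).Nonempty := by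
    rw [← card_pos, hrn]; omega
  have hCne : (univ.filter (fun j => (col j).Nonempty)).Nonempty := by
    rw [← card_pos, hcn]; omega
  obtain ⟨i1, hi1⟩ := hRne
  obtain ⟨j1, hj1⟩ := hCne
  -- the set of nonempty columns is an interval
  obtain ⟨a, haC⟩ := ebonds_eq_interval (row i1) (mem_filter.1 hi1).2 (hnfr i1) (heb_pt_R i1 hi1)
  obtain ⟨b, hbR⟩ := ebonds_eq_interval (col j1) (mem_filter.1 hj1).2 (hnfc j1) (heb_pt_C j1 hj1)
  rw [hroweq i1 hi1] at haC
  rw [hcoleq j1 hj1] at hbR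
  have hcardC : (row i1).card = n := by rw [hroweq i1 hi1, hcn]
  have hcardR : (col j1).card = n := by rw [hcoleq j1 hj1, hrn]
  rw [hroweq i1 hi1] at hcardC
  rw [hcoleq j1 hj1] at hcardR
  rw [hcardC] at haC
  rw [hcardR] at hbR
  refine ⟨a, b, fun i j => ?_⟩
  have hmemchar : j ∈ row i ↔ (j ∈ univ.filter (fun j => (col j).Nonempty) ∧
      i ∈ univ.filter (fun i => (row i).Nonempty)) := by
    constructor
    · intro h
      refine ⟨hrowsub i h, mem_filter.2 ⟨mem_univ i, ⟨j, h⟩⟩⟩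
    · rintro ⟨hj, hi⟩
      rw [hroweq i hi]
      exact hj
  rw [hmemchar, haC, hbR]
  simp only [mem_image, mem_range]
  constructor
  · rintro ⟨⟨p, hp, rfl⟩, ⟨q, hq, rfl⟩⟩
    exact ⟨⟨p, hp, rfl⟩, ⟨q, hq, rfl⟩⟩
  · rintro ⟨⟨p, hp, rfl⟩, ⟨q, hq, rfl⟩⟩
    exact ⟨⟨p, hp, rfl⟩, ⟨q, hq, rfl⟩⟩

end NSq

namespace NSq
variable {L : ℕ}

/-- occupied sites in row `i` (second coordinate fixed). -/
def rowSet (η : Config L) (i : ZMod (2 * L + 1)) : Finset (ZMod (2 * L + 1)) :=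
  univ.filter (fun j => η (j, i))

/-- occupied sites in column `j` (first coordinate fixed). -/
def colSet (η : Config L) (j : ZMod (2 * L + 1)) : Finset (ZMod (2 * L + 1)) :=
  univ.filter (fun i => η (j, i))

lemma rowSet_colSet (η : Config L) (i j : ZMod (2 * L + 1)) :
    j ∈ rowSet η i ↔ i ∈ colSet η j := by
  simp [rowSet, colSet]

lemma colSum (η : Config L) : ∑ j, (colSet η j).card = numParticles η := by
  unfold numParticles colSet
  rw [Fintype.sum_prod_type]
  apply Finset.sum_congr rfl
  intro j _
  rw [Finset.card_filter]

lemma rowSum (η : Config L) : ∑ i, (rowSet η i).card = numParticles η := by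
  unfold numParticles rowSet
  rw [Fintype.sum_prod_type, Finset.sum_comm]
  apply Finset.sum_congr rfl
  intro i _
  rw [Finset.card_filter]

lemma ebonds_rowSet (η : Config L) (i : ZMod (2 * L + 1)) :
    ebonds (rowSet η i) = (univ.filter (fun j => η (j, i) ∧ η (j + 1, i))).card := by
  unfold ebonds rowSet
  rw [Finset.filter_filter]
  congr 1
  ext j
  simp

lemma ebonds_colSet (η : Config L) (j : ZMod (2 * L + 1)) :
    ebonds (colSet η j) = (univ.filter (fun i => η (j, i) ∧ η (j, i + 1))).card := by
  unfold ebonds colSet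
  rw [Finset.filter_filter]
  congr 1
  ext i
  simp

lemma ham_eq (η : Config L) :
    ham η = -((∑ i, ebonds (rowSet η i) : ℝ) + (∑ j, ebonds (colSet η j) : ℝ)) := by
  unfold ham
  rw [Finset.sum_add_distrib]
  congr 1
  congr 1
  · -- horizontal
    have h1 : ∀ x : Torus L, occ η x * occ η (x + (1, 0))
        = (if η x ∧ η (x + (1, 0)) then (1 : ℝ) else 0) := by
      intro x
      unfold occ
      by_cases h : η x <;> by_cases h' : η (x + (1, 0)) <;> simp [h, h']
    rw [Finset.sum_congr rfl (fun x _ => h1 x), Finset.sum_boole]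
    have h2 : (univ.filter (fun x : Torus L => η x ∧ η (x + (1, 0)))).card
        = ∑ i, ebonds (rowSet η i) := by
      rw [Finset.card_filter, Fintype.sum_prod_type, Finset.sum_comm]
      apply Finset.sum_congr rfl
      intro i _
      rw [ebonds_rowSet, Finset.card_filter]
      apply Finset.sum_congr rfl
      intro j _
      have hx : ((j, i) + (1, 0) : Torus L) = (j + 1, i) := by
        simp [Prod.ext_iff]
      rw [hx]
    rw [h2]
    push_cast
    ring
  · -- vertical
    have h1 : ∀ x : Torus L, occ η x * occ η (x + (0, 1))
        = (if η x ∧ η (x + (0, 1)) then (1 : ℝ) else 0) := by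
      intro x
      unfold occ
      by_cases h : η x <;> by_cases h' : η (x + (0, 1)) <;> simp [h, h']
    rw [Finset.sum_congr rfl (fun x _ => h1 x), Finset.sum_boole]
    have h2 : (univ.filter (fun x : Torus L => η x ∧ η (x + (0, 1)))).card
        = ∑ j, ebonds (colSet η j) := by
      rw [Finset.card_filter, Fintype.sum_prod_type]
      apply Finset.sum_congr rfl
      intro j _
      rw [ebonds_colSet, Finset.card_filter]
      apply Finset.sum_congr rfl
      intro i _
      have hx : ((j, i) + (0, 1) : Torus L) = (j, i + 1) := by
        simp [Prod.ext_iff]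
      rw [hx]
    rw [h2]
    push_cast
    ring

end NSq

/-- for `K = n²` particles and `L > 2n`, every configuration with `n²`
particles which is not a square configuration has energy strictly greater than
`-2n(n-1)`; the square configurations are the unique ground states. -/
theorem non_square_has_higher_energy (L n : ℕ) (hn : 0 < n) (hL : 2 * n < L)
    (η : Config L) (hK : numParticles η = n ^ 2)
    (hns : ∀ x : Torus L, η ≠ squareConf L n x) :
    -(2 * (n : ℝ) * ((n : ℝ) - 1)) < ham η := by
  classical
  have hm : 4 * n + 3 ≤ 2 * L + 1 := by omega
  have hKr : ∑ i, (NSq.rowSet η i).card = n ^ 2 := by rw [NSq.rowSum, hK]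
  have hKc : ∑ j, (NSq.colSet η j).card = n ^ 2 := by rw [NSq.colSum, hK]
  have hstrict : ∑ i, NSq.ebonds (NSq.rowSet η i) + ∑ j, NSq.ebonds (NSq.colSet η j)
      < 2 * n * (n - 1) := by
    by_cases hfr : ∃ i, NSq.rowSet η i = univ
    · obtain ⟨i0, hi0⟩ := hfr
      exact NSq.aux_full hm hn (NSq.rowSet η) (NSq.colSet η) (NSq.rowSet_colSet η)
        hKr hKc i0 hi0
    by_cases hfc : ∃ j, NSq.colSet η j = univ
    · obtain ⟨j0, hj0⟩ := hfc
      have := NSq.aux_full hm hn (NSq.colSet η) (NSq.rowSet η)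
        (fun i j => (NSq.rowSet_colSet η j i).symm) hKc hKr j0 hj0
      omega
    push_neg at hfr hfc
    rcases NSq.aux_main hn (NSq.rowSet η) (NSq.colSet η) (NSq.rowSet_colSet η)
        hKr hKc hfr hfc with h | ⟨a, b, hch⟩
    · exact h
    · exfalso
      apply hns (a, b)
      funext z
      obtain ⟨j, i⟩ := z
      have hchar := hch i j
      rw [show (j ∈ NSq.rowSet η i) ↔ η (j, i) = true by simp [NSq.rowSet]] at hchar
      have hP : (∃ p ∈ Finset.range n ×ˢ Finset.range n,
          (j, i) = (a, b) + ((p.1 : ZMod (2 * L + 1)), (p.2 : ZMod (2 * L + 1)))) ↔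
          ((∃ p ∈ range n, j = a + (p : ZMod (2 * L + 1)))
            ∧ (∃ q ∈ range n, i = b + (q : ZMod (2 * L + 1)))) := by
        constructor
        · rintro ⟨⟨p, q⟩, hpq, heq⟩
          rw [mem_product] at hpq
          rw [Prod.mk_add_mk, Prod.mk.injEq] at heq
          exact ⟨⟨p, hpq.1, heq.1⟩, ⟨q, hpq.2, heq.2⟩⟩
        · rintro ⟨⟨p, hp, hjp⟩, ⟨q, hq, hiq⟩⟩
          refine ⟨(p, q), mem_product.2 ⟨hp, hq⟩, ?_⟩
          rw [Prod.mk_add_mk, Prod.mk.injEq]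
          exact ⟨hjp, hiq⟩
      show η (j, i) = squareConf L n (a, b) (j, i)
      unfold squareConf
      by_cases h : η (j, i)
      · rw [h, eq_comm, decide_eq_true_iff]
        exact hP.2 (hchar.1 h)
      · rw [Bool.not_eq_true] at h
        rw [h, eq_comm, decide_eq_false_iff_not]
        intro hcon
        have := hchar.2 (hP.1 hcon)
        rw [h] at this
        exact Bool.noConfusion this
  rw [NSq.ham_eq, neg_lt_neg_iff]
  have hcast : ((2 * n * (n - 1) : ℕ) : ℝ) = 2 * (n : ℝ) * ((n : ℝ) - 1) := by
    rw [Nat.cast_mul, Nat.cast_mul, Nat.cast_sub hn]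
    push_cast
    ring
  calc (∑ i, NSq.ebonds (NSq.rowSet η i) : ℝ) + (∑ j, NSq.ebonds (NSq.colSet η j) : ℝ)
      = ((∑ i, NSq.ebonds (NSq.rowSet η i) + ∑ j, NSq.ebonds (NSq.colSet η j) : ℕ) : ℝ) := by
        push_cast; ring
    _ < ((2 * n * (n - 1) : ℕ) : ℝ) := by exact_mod_cast hstrict
    _ = 2 * (n : ℝ) * ((n : ℝ) - 1) := hcast
end

section
/- Let Y(t) be the continuous-time Markov chain on {0,1,2,3} with jump rates r(1,2) = r(2,1) = a, r(1,0) = 1/4, r(1,3) = r(2,3) = ε, and all other rates zero, where a ≥ 1 and 0 < ε ≤ 1/4. Then for i = 1, 2, the probability that Y started at i hits state 3 before state 0 satisfies P_i[H_3 < H_0] ≤ 4ε(2a + 1/4 + ε) / (a + 4ε(2a + 1/4 + ε)) ≤ 10ε. -/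
open Finset

section ChainBasics

variable {E : Type*} [Fintype E] [DecidableEq E]

/-- The state occupied just before the `i`-th step of a finite path that starts at `η`
and then visits `w 0, w 1, …`. -/
def pstate (η : E) {n : ℕ} (w : Fin n → E) (i : Fin n) : E :=
  if (i : ℕ) = 0 then η else w ⟨(i : ℕ) - 1, lt_of_le_of_lt (Nat.sub_le _ _) i.isLt⟩

/-- The probability (product of one-step transition probabilities of the jump chain `q`)
of the finite path starting at `η` and successively visiting `w 0, …, w (n-1)`. -/
noncomputable def pathP (q : E → E → ℝ) (η : E) {n : ℕ} (w : Fin n → E) : ℝ :=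
  ∏ i : Fin n, q (pstate η w i) (w i)

open Classical in
/-- For a chain with one-step transition probabilities `q` started at `η`, the probability
that the first visit (at a step `≥ 1`) to the set `A` occurs at a state of `B`.
For `B ⊆ A`, this is the probability of the event `{H⁺_A = H_B}`. -/
noncomputable def firstHitIn (q : E → E → ℝ) (η : E) (B A : Finset E) : ℝ :=
  ∑' n : ℕ, ∑ w : Fin (n + 1) → E,
    if (∀ i : Fin (n + 1), (i : ℕ) < n → w i ∉ A) ∧ w (Fin.last n) ∈ B
    then pathP q η w else 0

/-- `q` is a stochastic matrix. -/
def RowStochastic (q : E → E → ℝ) : Prop :=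
  (∀ x y, 0 ≤ q x y) ∧ ∀ x, ∑ y, q x y = 1

/-- Irreducibility: any state can be reached from any state with positive probability. -/
def ChainIrreducible (q : E → E → ℝ) : Prop :=
  ∀ x y : E, ∃ (n : ℕ) (w : Fin (n + 1) → E), w (Fin.last n) = y ∧ 0 < pathP q x w

/-- The holding rate `λ(x) = ∑_y R(x,y)` of a continuous-time chain with jump rates `R`. -/
noncomputable def lam (R : E → E → ℝ) (x : E) : ℝ := ∑ y, R x y

/-- The jump-chain transition probabilities of a continuous-time chain with rates `R`. -/
noncomputable def jmp (R : E → E → ℝ) (x y : E) : ℝ := R x y / lam R x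

/-- The capacity `Cap(A,B) = ∑_{a∈A} μ(a) λ(a) P_a[H_B < H⁺_A]` of a continuous-time
chain with jump rates `R` and measure `μ`. -/
noncomputable def capac (R : E → E → ℝ) (μ : E → ℝ) (A B : Finset E) : ℝ :=
  ∑ a ∈ A, μ a * lam R a * firstHitIn (jmp R) a B (A ∪ B)

open Classical in
/-- The jump rates of the trace on `A` of a continuous-time chain with jump rates `R`:
`R_A(a,b) = λ(a) P_a[H⁺_A = H_b]` for `a ≠ b` in `A`. -/
noncomputable def traceRate (R : E → E → ℝ) (A : Finset E) (a b : E) : ℝ :=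
  if a ∈ A ∧ b ∈ A ∧ a ≠ b then lam R a * firstHitIn (jmp R) a {b} A else 0

end ChainBasics

section HitAux
set_option linter.unusedSectionVars false
variable {E : Type*} [Fintype E] [DecidableEq E]

open Classical in
noncomputable def hitG (q : E → E → ℝ) (B A : Finset E) (η : E) (n : ℕ) : ℝ :=
  ∑ w : Fin (n + 1) → E,
    if (∀ i : Fin (n + 1), (i : ℕ) < n → w i ∉ A) ∧ w (Fin.last n) ∈ B
    then pathP q η w else 0

lemma firstHitIn_eq_tsum (q : E → E → ℝ) (η : E) (B A : Finset E) :
    firstHitIn q η B A = ∑' n, hitG q B A η n := rfl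

lemma pstate_cons_succ (η x : E) {n : ℕ} (v : Fin (n+1) → E) (i : Fin (n+1)) :
    pstate η (Fin.cons x v) i.succ = pstate x v i := by
  rcases i with ⟨iv, hi⟩
  cases iv with
  | zero => simp [pstate]
  | succ m =>
    simp only [pstate, Fin.val_succ, Nat.succ_ne_zero, if_false, Nat.add_sub_cancel,
      Nat.succ_sub_one]
    exact Fin.cons_succ (α := fun _ : Fin (n+2) => E) x v ⟨m, Nat.lt_of_succ_lt hi⟩

lemma pathP_cons (q : E → E → ℝ) (η x : E) {n : ℕ} (v : Fin (n+1) → E) :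
    pathP q η (Fin.cons x v) = q η x * pathP q x v := by
  have h0 : pstate η (Fin.cons x v) 0 = η := by simp [pstate]
  unfold pathP
  rw [Fin.prod_univ_succ, Fin.cons_zero, h0]
  exact congrArg (q η x * ·)
    (Finset.prod_congr rfl fun i _ => by rw [pstate_cons_succ, Fin.cons_succ])

lemma sum_pi_succ {n : ℕ} (F : (Fin (n+2) → E) → ℝ) :
    ∑ w : Fin (n+2) → E, F w = ∑ x : E, ∑ v : Fin (n+1) → E, F (Fin.cons x v) := by
  rw [← Equiv.sum_comp (Fin.consEquiv fun _ : Fin (n+2) => E) F, Fintype.sum_prod_type]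
  rfl

lemma hitG_succ (q : E → E → ℝ) (B A : Finset E) (η : E) (n : ℕ) :
    hitG q B A η (n+1) = ∑ x : E, if x ∉ A then q η x * hitG q B A x n else 0 := by
  classical
  unfold hitG
  rw [sum_pi_succ]
  refine Finset.sum_congr rfl fun x _ => ?_
  have key : ∀ v : Fin (n+1) → E,
      ((∀ i : Fin (n+2), (i:ℕ) < n+1 → (Fin.cons x v : Fin (n+2) → E) i ∉ A) ∧
        (Fin.cons x v : Fin (n+2) → E) (Fin.last (n+1)) ∈ B)
      ↔ (x ∉ A ∧ ((∀ j : Fin (n+1), (j:ℕ) < n → v j ∉ A) ∧ v (Fin.last n) ∈ B)) := by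
    intro v
    constructor
    · rintro ⟨h1, h2⟩
      refine ⟨by simpa using h1 0 (Nat.succ_pos n), fun j hj => ?_, ?_⟩
      · have := h1 j.succ (by simpa using Nat.succ_lt_succ hj)
        simpa using this
      · rw [← Fin.succ_last, Fin.cons_succ] at h2
        exact h2
    · rintro ⟨hx, h1, h2⟩
      refine ⟨fun i hi => ?_, ?_⟩
      · rcases Fin.eq_zero_or_eq_succ i with rfl | ⟨j, rfl⟩
        · simpa using hx
        · rw [Fin.cons_succ]
          exact h1 j (by simpa using Nat.lt_of_succ_lt_succ hi)
      · rw [← Fin.succ_last, Fin.cons_succ]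
        exact h2
  by_cases hx : x ∈ A
  · simp only [hx, not_true_eq_false, if_false]
    refine Finset.sum_eq_zero fun v _ => ?_
    rw [if_neg]
    rw [key]
    simp [hx]
  · simp only [hx, not_false_eq_true, if_true, Finset.mul_sum]
    refine Finset.sum_congr rfl fun v _ => ?_
    have hk := key v
    split_ifs with h1 h2 h2
    · rw [pathP_cons]
    · exact absurd (hk.mp h1).2 h2
    · exact absurd (hk.mpr ⟨hx, h2⟩) h1
    · exact (mul_zero _).symm

lemma hitG_zero (q : E → E → ℝ) (B A : Finset E) (η : E) :
    hitG q B A η 0 = ∑ x : E, if x ∈ B then q η x else 0 := by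
  classical
  unfold hitG
  rw [← Equiv.sum_comp (Equiv.funUnique (Fin 1) E).symm]
  refine Finset.sum_congr rfl fun x _ => ?_
  simp [pathP, pstate, Equiv.funUnique]

end HitAux


/-- the continuous-time Markov chain on `{0,1,2,3}` with rates
`r(1,2) = r(2,1) = a`, `r(1,0) = 1/4`, `r(1,3) = r(2,3) = ε`, all other rates `0`,
with `a ≥ 1` and `0 < ε ≤ 1/4`.  The probability, starting from `i = 1, 2`, of hitting
state `3` before state `0` (which depends only on the jump chain `jmp r`) is at most
`4ε(2a + 1/4 + ε)/(a + 4ε(2a + 1/4 + ε)) ≤ 10ε`, with equality in the first inequality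
for `i = 2`. -/
theorem four_state_chain_bound (a ε : ℝ) (ha : 1 ≤ a) (hε : 0 < ε) (hε4 : ε ≤ 1 / 4) :
    let r : Fin 4 → Fin 4 → ℝ :=
      ![![0, 0, 0, 0], ![1/4, 0, a, ε], ![0, a, 0, ε], ![0, 0, 0, 0]]
    firstHitIn (jmp r) (1 : Fin 4) ({3} : Finset (Fin 4)) ({0, 3} : Finset (Fin 4)) ≤
        4 * ε * (2 * a + 1/4 + ε) / (a + 4 * ε * (2 * a + 1/4 + ε)) ∧
    firstHitIn (jmp r) (2 : Fin 4) ({3} : Finset (Fin 4)) ({0, 3} : Finset (Fin 4)) =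
        4 * ε * (2 * a + 1/4 + ε) / (a + 4 * ε * (2 * a + 1/4 + ε)) ∧
    4 * ε * (2 * a + 1/4 + ε) / (a + 4 * ε * (2 * a + 1/4 + ε)) ≤ 10 * ε := by
  intro r
  have hl1p : (0:ℝ) < a + ε + 1/4 := by linarith
  have hl2p : (0:ℝ) < a + ε := by linarith
  have hl1ne : (a + ε + 1/4 : ℝ) ≠ 0 := ne_of_gt hl1p
  have hl2ne : (a + ε : ℝ) ≠ 0 := ne_of_gt hl2p
  have hDp : (0:ℝ) < a + 4 * ε * (2 * a + 1/4 + ε) := by nlinarith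
  have hDne : (a + 4 * ε * (2 * a + 1/4 + ε) : ℝ) ≠ 0 := ne_of_gt hDp
  -- rates
  have hr1 : r 1 = ![1/4, 0, a, ε] := rfl
  have hr2 : r 2 = ![0, a, 0, ε] := rfl
  have hl1 : lam r 1 = a + ε + 1/4 := by
    simp [lam, Fin.sum_univ_four, hr1]; ring
  have hl2 : lam r 2 = a + ε := by
    simp [lam, Fin.sum_univ_four, hr2]
  set q : Fin 4 → Fin 4 → ℝ := jmp r with hqdef
  have hq11 : q 1 1 = 0 := by simp [hqdef, jmp, hr1]
  have hq12 : q 1 2 = a / (a + ε + 1/4) := by simp [hqdef, jmp, hr1, hl1]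
  have hq13 : q 1 3 = ε / (a + ε + 1/4) := by simp [hqdef, jmp, hr1, hl1]
  have hq21 : q 2 1 = a / (a + ε) := by simp [hqdef, jmp, hr2, hl2]
  have hq22 : q 2 2 = 0 := by simp [hqdef, jmp, hr2]
  have hq23 : q 2 3 = ε / (a + ε) := by simp [hqdef, jmp, hr2, hl2]
  -- memberships
  have m0 : (0:Fin 4) ∈ ({0,3} : Finset (Fin 4)) := by decide
  have m1 : (1:Fin 4) ∉ ({0,3} : Finset (Fin 4)) := by decide
  have m2 : (2:Fin 4) ∉ ({0,3} : Finset (Fin 4)) := by decide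
  have m3 : (3:Fin 4) ∈ ({0,3} : Finset (Fin 4)) := by decide
  have n3 : (3:Fin 4) ∈ ({3} : Finset (Fin 4)) := by decide
  have n0 : (0:Fin 4) ∉ ({3} : Finset (Fin 4)) := by decide
  have n1 : (1:Fin 4) ∉ ({3} : Finset (Fin 4)) := by decide
  have n2 : (2:Fin 4) ∉ ({3} : Finset (Fin 4)) := by decide
  set G : Fin 4 → ℕ → ℝ := fun i n => hitG q ({3} : Finset (Fin 4)) ({0,3} : Finset (Fin 4)) i n
    with hGdef
  have hGrec : ∀ (i : Fin 4) (n : ℕ), G i (n+1) = q i 1 * G 1 n + q i 2 * G 2 n := by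
    intro i n
    show hitG q _ _ i (n+1) = _
    rw [hitG_succ, Fin.sum_univ_four, if_neg (not_not_intro m0), if_pos m1, if_pos m2,
      if_neg (not_not_intro m3)]
    ring
  have hG0 : ∀ i : Fin 4, G i 0 = q i 3 := by
    intro i
    show hitG q _ _ i 0 = _
    rw [hitG_zero, Fin.sum_univ_four, if_neg n0, if_neg n1, if_neg n2, if_pos n3]
    ring
  have hG1s : ∀ n, G 1 (n+1) = a / (a + ε + 1/4) * G 2 n := by
    intro n; rw [hGrec, hq11, hq12]; ring
  have hG2s : ∀ n, G 2 (n+1) = a / (a + ε) * G 1 n := by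
    intro n; rw [hGrec, hq21, hq22]; ring
  set ρ : ℝ := a / (a + ε + 1/4) * (a / (a + ε)) with hρdef
  have key : ∀ k : ℕ,
      G 1 (2*k) = ρ^k * (ε / (a + ε + 1/4)) ∧
      G 2 (2*k) = ρ^k * (ε / (a + ε)) ∧
      G 1 (2*k+1) = ρ^k * (a / (a + ε + 1/4) * (ε / (a + ε))) ∧
      G 2 (2*k+1) = ρ^k * (a / (a + ε) * (ε / (a + ε + 1/4))) := by
    intro k
    induction k with
    | zero =>
      refine ⟨?_, ?_, ?_, ?_⟩
      · rw [show 2*0 = 0 from rfl, hG0 1, hq13]; ring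
      · rw [show 2*0 = 0 from rfl, hG0 2, hq23]; ring
      · rw [show 2*0+1 = 0+1 from rfl, hG1s, hG0 2, hq23]; ring
      · rw [show 2*0+1 = 0+1 from rfl, hG2s, hG0 1, hq13]; ring
    | succ k ih =>
      obtain ⟨i1, i2, i3, i4⟩ := ih
      have e : 2*(k+1) = (2*k+1)+1 := by ring
      have g1 : G 1 (2*(k+1)) = ρ^(k+1) * (ε / (a + ε + 1/4)) := by
        rw [e, hG1s, i4, hρdef]; ring
      have g2 : G 2 (2*(k+1)) = ρ^(k+1) * (ε / (a + ε)) := by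
        rw [e, hG2s, i3, hρdef]; ring
      have g3 : G 1 (2*(k+1)+1) = ρ^(k+1) * (a / (a + ε + 1/4) * (ε / (a + ε))) := by
        rw [hG1s, g2]; ring
      have g4 : G 2 (2*(k+1)+1) = ρ^(k+1) * (a / (a + ε) * (ε / (a + ε + 1/4))) := by
        rw [hG2s, g1]; ring
      exact ⟨g1, g2, g3, g4⟩
  have hρnn : 0 ≤ ρ := by
    apply mul_nonneg <;> apply div_nonneg <;> linarith
  have hρlt : ρ < 1 := by
    have h1 : a / (a + ε + 1/4) < 1 := (div_lt_one hl1p).2 (by linarith)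
    have h2 : a / (a + ε) < 1 := (div_lt_one hl2p).2 (by linarith)
    have h1n : 0 ≤ a / (a + ε + 1/4) := div_nonneg (by linarith) (le_of_lt hl1p)
    have h2n : 0 ≤ a / (a + ε) := div_nonneg (by linarith) (le_of_lt hl2p)
    calc ρ ≤ a / (a + ε + 1/4) * 1 := by
            rw [hρdef]; exact mul_le_mul_of_nonneg_left (le_of_lt h2) h1n
      _ = a / (a + ε + 1/4) := mul_one _
      _ < 1 := h1
  have h1ρp : (0:ℝ) < 1 - ρ := by linarith
  have hgeom : Summable fun k : ℕ => ρ^k := summable_geometric_of_lt_one hρnn hρlt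
  have htg : ∑' k : ℕ, ρ^k = (1 - ρ)⁻¹ := tsum_geometric_of_lt_one hρnn hρlt
  -- tsum computation
  have hval : ∀ (i : Fin 4) (c d : ℝ),
      (∀ k, G i (2*k) = ρ^k * c) → (∀ k, G i (2*k+1) = ρ^k * d) →
      firstHitIn q i ({3} : Finset (Fin 4)) ({0,3} : Finset (Fin 4))
        = (1 - ρ)⁻¹ * c + (1 - ρ)⁻¹ * d := by
    intro i c d hc hd
    have hce : (fun k : ℕ => G i (2*k)) = fun k => ρ^k * c := funext hc
    have hde : (fun k : ℕ => G i (2*k+1)) = fun k => ρ^k * d := funext hd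
    have hsc : Summable fun k : ℕ => G i (2*k) := by rw [hce]; exact hgeom.mul_right c
    have hsd : Summable fun k : ℕ => G i (2*k+1) := by rw [hde]; exact hgeom.mul_right d
    rw [firstHitIn_eq_tsum]
    rw [show (fun n => hitG q ({3} : Finset (Fin 4)) ({0,3} : Finset (Fin 4)) i n) = G i from rfl]
    rw [← tsum_even_add_odd hsc hsd, hce, hde, tsum_mul_right, tsum_mul_right, htg]
  have hv1 := hval 1 (ε / (a + ε + 1/4)) (a / (a + ε + 1/4) * (ε / (a + ε)))
    (fun k => (key k).1) (fun k => (key k).2.2.1)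
  have hv2 := hval 2 (ε / (a + ε)) (a / (a + ε) * (ε / (a + ε + 1/4)))
    (fun k => (key k).2.1) (fun k => (key k).2.2.2)
  have hρalt : 1 - ρ = (a + 4 * ε * (2 * a + 1/4 + ε)) / (4 * (a + ε + 1/4) * (a + ε)) := by
    rw [hρdef]; field_simp; ring
  have heq2 : firstHitIn q 2 ({3} : Finset (Fin 4)) ({0,3} : Finset (Fin 4))
      = 4 * ε * (2 * a + 1/4 + ε) / (a + 4 * ε * (2 * a + 1/4 + ε)) := by
    rw [hv2, hρalt, inv_div]
    field_simp
    ring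
  refine ⟨?_, heq2, ?_⟩
  · -- i = 1 bound
    rw [hv1, ← heq2, hv2]
    have hT : 0 ≤ (1 - ρ)⁻¹ := inv_nonneg.2 (le_of_lt h1ρp)
    have hmono : ε / (a + ε + 1/4) ≤ ε / (a + ε) := by
      apply div_le_div_of_nonneg_left (le_of_lt hε) hl2p <;> linarith
    have hcross : (1 - ρ)⁻¹ * (a / (a + ε + 1/4) * (ε / (a + ε)))
        = (1 - ρ)⁻¹ * (a / (a + ε) * (ε / (a + ε + 1/4))) := by ring
    have := mul_le_mul_of_nonneg_left hmono hT
    linarith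
  · rw [div_le_iff₀ hDp]
    nlinarith [mul_le_mul_of_nonneg_left ha hε.le, mul_le_mul_of_nonneg_left hε4 hε.le,
      mul_nonneg (mul_nonneg hε.le hε.le) (show (0:ℝ) ≤ 2*a+1/4+ε by linarith)]
end
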